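/- Let G be a nontrivial finite group, m > 1, x ∈ G \ {e}. The induced subgraph of G_m(G) on the vertex set I_m(x) = { x^{±1}_{[k,l)} : 1 ≤ k < l ≤ m+1 } is d-regular, where d = 2m − 2 if x has order 2 and d = 2m − 1 if x has order greater than 2. -/

import Mathlib

/-!
Write `u_[k,l)` for `intvl m u k l`. An interval element is constant on its support, which is
convex; comparing the values of `w * v⁻¹` at three positions shows that `u_[k',l')` is adjacent to
`x_[k,l)` exactly when the two intervals share an endpoint, with `u = x` if it is the left endpoint
of both or the right endpoint of both and `u = x⁻¹` if the intervals abut, or when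
`[k',l') = [k,l)` and `u = x⁻¹ ≠ x`. The neighbours of the first kind are indexed by the shared
endpoint `c ∈ {k, l}` and the other endpoint `d ∈ {1, …, m + 1} \ {k, l}`, so there are
`2 (m - 1)` of them, and the second kind adds one neighbour exactly when `x` has order greater
than two. As `I_m(x⁻¹) = I_m(x)`, neighbours of `x⁻¹_[k,l)` are counted the same way.
-/

namespace CayleyStmt10

variable {G : Type*}

def intvl [Group G] (m : ℕ) (x : G) (k l : ℕ) : Fin m → G :=
  fun i => if k ≤ i.1 + 1 ∧ i.1 + 1 < l then x else 1

def cS (G : Type*) [Group G] (m : ℕ) : Set (Fin m → G) :=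
  {v | ∃ (x : G) (k l : ℕ), x ≠ 1 ∧ 1 ≤ k ∧ k < l ∧ l ≤ m + 1 ∧ v = intvl m x k l}

def cAdj [Group G] (m : ℕ) (g h : Fin m → G) : Prop := h * g⁻¹ ∈ cS G m

def cI [Group G] (m : ℕ) (x : G) : Set (Fin m → G) :=
  {v | ∃ k l : ℕ, 1 ≤ k ∧ k < l ∧ l ≤ m + 1 ∧
    (v = intvl m x k l ∨ v = intvl m x⁻¹ k l)}

theorem fin_succ_funext_iff {α : Type*} {m : ℕ} {f g : ℕ → α} :
    ((fun i : Fin m => f (i.1 + 1)) = fun i => g (i.1 + 1)) ↔ ∀ p, 1 ≤ p → p ≤ m → f p = g p := by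
  refine ⟨fun h p hp hpm => ?_, fun h => funext fun i => h _ (by omega) i.2⟩
  simpa [Nat.sub_add_cancel hp] using congrFun h ⟨p - 1, by omega⟩

section
variable [Group G] {m k l k' l' a b p : ℕ} {x y u : G}

def intvlAt (x : G) (k l p : ℕ) : G := if k ≤ p ∧ p < l then x else 1

theorem intvl_eq_intvlAt (m : ℕ) (x : G) (k l : ℕ) :
    intvl m x k l = fun i => intvlAt x k l (i.1 + 1) :=
  rfl

theorem intvlAt_of_mem (hk : k ≤ p) (hl : p < l) : intvlAt x k l p = x := if_pos ⟨hk, hl⟩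

theorem intvlAt_of_lt_left (h : p < k) : intvlAt x k l p = 1 := if_neg (by omega)

theorem intvlAt_of_right_le (h : l ≤ p) : intvlAt x k l p = 1 := if_neg (by omega)

theorem intvlAt_eq_of_le_of_le {r s : ℕ} (hpr : p ≤ r) (hrs : r ≤ s) (hp : intvlAt y a b p ≠ 1)
    (hs : intvlAt y a b s ≠ 1) : intvlAt y a b r = intvlAt y a b p := by
  unfold intvlAt at *
  split_ifs at * <;> first | rfl | omega | simp_all

theorem inv_intvl : (intvl m y a b)⁻¹ = intvl m y⁻¹ a b := by
  funext i
  simp only [intvl, Pi.inv_apply]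
  split_ifs <;> simp

theorem intvl_eq_intvl_iff (hx : x ≠ 1) (hy : y ≠ 1) (hk : 1 ≤ k) (hkl : k < l) (hl : l ≤ m + 1)
    (hk' : 1 ≤ k') (hkl' : k' < l') (hl' : l' ≤ m + 1) :
    intvl m x k l = intvl m y k' l' ↔ x = y ∧ k = k' ∧ l = l' := by
  refine ⟨fun h => ?_, by rintro ⟨rfl, rfl, rfl⟩; rfl⟩
  rw [intvl_eq_intvlAt, intvl_eq_intvlAt, fin_succ_funext_iff] at h
  have hkk' : k = k' := by
    by_contra hne
    rcases Nat.lt_or_gt_of_ne hne with hlt | hlt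
    · have := h k hk (by omega)
      simp (disch := omega) only [intvlAt_of_mem, intvlAt_of_lt_left] at this
      exact hx this
    · have := h k' hk' (by omega)
      simp (disch := omega) only [intvlAt_of_mem, intvlAt_of_lt_left] at this
      exact hy this.symm
  subst hkk'
  have hll' : l = l' := by
    by_contra hne
    rcases Nat.lt_or_gt_of_ne hne with hlt | hlt
    · have := h l (by omega) (by omega)
      simp (disch := omega) only [intvlAt_of_mem, intvlAt_of_right_le] at this
      exact hy this.symm
    · have := h l' (by omega) (by omega)
      simp (disch := omega) only [intvlAt_of_mem, intvlAt_of_right_le] at this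
      exact hx this
  subst hll'
  have := h k hk (by omega)
  simp (disch := omega) only [intvlAt_of_mem] at this
  exact ⟨this, rfl, rfl⟩

theorem intvl_ne_one (hy : y ≠ 1) (ha : 1 ≤ a) (hab : a < b) (hb : b ≤ m + 1) :
    intvl m y a b ≠ 1 := fun h =>
  hy (by simpa [intvl, Nat.sub_add_cancel ha, hab] using congrFun h ⟨a - 1, by omega⟩)

theorem inv_mem_cS {f : Fin m → G} (hf : f ∈ cS G m) : f⁻¹ ∈ cS G m := by
  obtain ⟨y, a, b, hy, ha, hab, hb, rfl⟩ := hf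
  exact ⟨y⁻¹, a, b, inv_ne_one.2 hy, ha, hab, hb, inv_intvl⟩

theorem cAdj.symm {g h : Fin m → G} (hgh : cAdj m g h) : cAdj m h g := by
  simpa [cAdj] using inv_mem_cS hgh

theorem cAdj_irrefl (g : Fin m → G) : ¬cAdj m g g := by
  rintro ⟨y, a, b, hy, ha, hab, hb, h⟩
  exact intvl_ne_one hy ha hab hb (by rw [← h, mul_inv_cancel])

theorem cAdj_intvl_iff_exists :
    cAdj m (intvl m x k l) (intvl m u k' l') ↔ ∃ y a b, y ≠ 1 ∧ 1 ≤ a ∧ a < b ∧ b ≤ m + 1 ∧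
      ∀ p, 1 ≤ p → p ≤ m → intvlAt u k' l' p * (intvlAt x k l p)⁻¹ = intvlAt y a b p := by
  simp only [cAdj, cS, intvl_eq_intvlAt]
  exact exists_congr fun y => exists₂_congr fun a b => by rw [← fin_succ_funext_iff]; rfl

theorem quot_eq_of_cAdj_intvl (h : cAdj m (intvl m x k l) (intvl m u k' l')) {r s : ℕ}
    (hp : 1 ≤ p) (hpr : p ≤ r) (hrs : r ≤ s) (hs : s ≤ m)
    (hQp : intvlAt u k' l' p * (intvlAt x k l p)⁻¹ ≠ 1)
    (hQs : intvlAt u k' l' s * (intvlAt x k l s)⁻¹ ≠ 1) :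
    intvlAt u k' l' r * (intvlAt x k l r)⁻¹ = intvlAt u k' l' p * (intvlAt x k l p)⁻¹ := by
  obtain ⟨y, a, b, -, -, -, -, hQ⟩ := cAdj_intvl_iff_exists.1 h
  rw [hQ p hp (by omega)] at hQp ⊢
  rw [hQ s (by omega) hs] at hQs
  rw [hQ r (by omega) (by omega)]
  exact intvlAt_eq_of_le_of_le hpr hrs hQp hQs

theorem cAdj_intvl_cases (hx : x ≠ 1) (hu : u ≠ 1) (hk : 1 ≤ k) (hkl : k < l) (hl : l ≤ m + 1)
    (hk' : 1 ≤ k') (hkl' : k' < l') (hl' : l' ≤ m + 1)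
    (h : cAdj m (intvl m x k l) (intvl m u k' l')) :
    (k' = k ∧ l' = l ∧ u ≠ x) ∨ ((k' = k ∧ l' ≠ l ∨ k' ≠ k ∧ l' = l) ∧ u = x) ∨
      ((k' = l ∨ l' = k) ∧ u = x⁻¹) := by
  wlog hkk' : k ≤ k' generalizing x u k l k' l'
  · have := this hu hx hk' hkl' hl' hk hkl hl h.symm (by omega)
    grind [inv_eq_iff_eq_inv]
  have eq_at {p r s : ℕ} := quot_eq_of_cAdj_intvl (p := p) (r := r) (s := s) h
  rcases Nat.eq_or_lt_of_le hkk' with rfl | hkk'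
  · rcases lt_trichotomy l' l with hl'l | rfl | hll'
    · refine Or.inr (Or.inl ⟨Or.inl ⟨rfl, hl'l.ne⟩, ?_⟩)
      have := eq_at (p := k) (r := l') (s := l') hk (by omega) le_rfl (by omega)
      simp (disch := omega) only [intvlAt_of_mem, intvlAt_of_right_le] at this
      simp_all [mul_inv_eq_one]
    · exact Or.inl ⟨rfl, rfl, by rintro rfl; exact cAdj_irrefl _ h⟩
    · refine Or.inr (Or.inl ⟨Or.inl ⟨rfl, hll'.ne'⟩, ?_⟩)
      have := eq_at (p := k) (r := l) (s := l) hk (by omega) le_rfl (by omega)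
      simp (disch := omega) only [intvlAt_of_mem, intvlAt_of_right_le] at this
      simp_all [mul_inv_eq_one]
  rcases lt_trichotomy l k' with hlk' | hlk' | hk'l
  · have := eq_at (p := k) (r := l) (s := k') hk (by omega) (by omega) (by omega)
    simp (disch := omega) only [intvlAt_of_mem, intvlAt_of_right_le, intvlAt_of_lt_left] at this
    simp_all
  · refine Or.inr (Or.inr ⟨Or.inl hlk'.symm, ?_⟩)
    have := eq_at (p := k) (r := l) (s := l) hk (by omega) le_rfl (by omega)
    simp (disch := omega) only [intvlAt_of_mem, intvlAt_of_right_le, intvlAt_of_lt_left] at this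
    simp_all
  rcases lt_trichotomy l' l with hl'l | rfl | hll'
  · have := eq_at (p := k) (r := k') (s := l') hk (by omega) (by omega) (by omega)
    simp (disch := omega) only [intvlAt_of_mem, intvlAt_of_right_le, intvlAt_of_lt_left] at this
    simp_all
  · refine Or.inr (Or.inl ⟨Or.inr ⟨hkk'.ne', rfl⟩, ?_⟩)
    have := eq_at (p := k) (r := k') (s := k') hk (by omega) le_rfl (by omega)
    simp (disch := omega) only [intvlAt_of_mem, intvlAt_of_lt_left] at this
    simp_all [mul_inv_eq_one]
  · have := eq_at (p := k) (r := k') (s := l) hk (by omega) (by omega) (by omega)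
    simp (disch := omega) only [intvlAt_of_mem, intvlAt_of_right_le, intvlAt_of_lt_left] at this
    simp_all

theorem cAdj_intvl_of_cases (hx : x ≠ 1) (hk : 1 ≤ k) (hkl : k < l) (hl : l ≤ m + 1)
    (hk' : 1 ≤ k') (hkl' : k' < l') (hl' : l' ≤ m + 1)
    (h : (k' = k ∧ l' = l ∧ u ≠ x) ∨ ((k' = k ∧ l' ≠ l ∨ k' ≠ k ∧ l' = l) ∧ u = x) ∨
      ((k' = l ∨ l' = k) ∧ u = x⁻¹)) :
    cAdj m (intvl m x k l) (intvl m u k' l') := by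
  have hx' : x⁻¹ ≠ 1 := inv_ne_one.2 hx
  have of_eq {y : G} (a b : ℕ) (hy : y ≠ 1) (ha : 1 ≤ a) (hab : a < b) (hb : b ≤ m + 1)
      (hQ : ∀ p, intvlAt u k' l' p * (intvlAt x k l p)⁻¹ = intvlAt y a b p) :
      cAdj m (intvl m x k l) (intvl m u k' l') :=
    cAdj_intvl_iff_exists.2 ⟨y, a, b, hy, ha, hab, hb, fun p _ _ => hQ p⟩
  rcases h with ⟨rfl, rfl, hux⟩ | ⟨⟨rfl, hl'l⟩ | ⟨hk'k, rfl⟩, rfl⟩ | ⟨rfl | rfl, rfl⟩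
  · refine of_eq k' l' (mul_inv_eq_one.not.2 hux) hk' hkl' hl' fun p => ?_
    unfold intvlAt; split_ifs <;> simp
  · rcases Nat.lt_or_gt_of_ne hl'l with hlt | hlt
    · refine of_eq l' l hx' (by omega) hlt hl fun p => ?_
      unfold intvlAt; split_ifs <;> first | omega | simp
    · refine of_eq l l' hx (by omega) hlt hl' fun p => ?_
      unfold intvlAt; split_ifs <;> first | omega | simp
  · rcases Nat.lt_or_gt_of_ne hk'k with hlt | hlt
    · refine of_eq k' k hx hk' hlt (by omega) fun p => ?_
      unfold intvlAt; split_ifs <;> first | omega | simp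
    · refine of_eq k k' hx' hk hlt (by omega) fun p => ?_
      unfold intvlAt; split_ifs <;> first | omega | simp
  · refine of_eq k l' hx' hk (by omega) hl' fun p => ?_
    unfold intvlAt; split_ifs <;> first | omega | simp
  · refine of_eq k' l hx' hk' (by omega) hl fun p => ?_
    unfold intvlAt; split_ifs <;> first | omega | simp

theorem cAdj_intvl_iff (hx : x ≠ 1) (hu : u ≠ 1) (hk : 1 ≤ k) (hkl : k < l) (hl : l ≤ m + 1)
    (hk' : 1 ≤ k') (hkl' : k' < l') (hl' : l' ≤ m + 1) :
    cAdj m (intvl m x k l) (intvl m u k' l') ↔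
      (k' = k ∧ l' = l ∧ u ≠ x) ∨ ((k' = k ∧ l' ≠ l ∨ k' ≠ k ∧ l' = l) ∧ u = x) ∨
        ((k' = l ∨ l' = k) ∧ u = x⁻¹) :=
  ⟨cAdj_intvl_cases hx hu hk hkl hl hk' hkl' hl', cAdj_intvl_of_cases hx hk hkl hl hk' hkl' hl'⟩

theorem cI_inv (m : ℕ) (x : G) : cI m x⁻¹ = cI m x := by
  ext w
  simp only [cI, inv_inv]
  constructor <;> rintro ⟨k, l, h1, h2, h3, h4 | h4⟩ <;>
    exact ⟨k, l, h1, h2, h3, by tauto⟩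

/-- The element of `I_m(x)` with interval endpoints `c` and `d`, where `c` is an endpoint of
`[k, l)`: it carries `x` when `c` is the left endpoint of both intervals or the right endpoint of
both, and `x⁻¹` otherwise. -/
def endpointNbr (m : ℕ) (x : G) (k c d : ℕ) : Fin m → G :=
  intvl m (if (c = k ↔ c < d) then x else x⁻¹) (min c d) (max c d)

theorem nbrs_intvl_eq (hx : x ≠ 1) (hk : 1 ≤ k) (hkl : k < l) (hl : l ≤ m + 1) :
    {w | w ∈ cI m x ∧ cAdj m (intvl m x k l) w} =
      Function.uncurry (endpointNbr m x k) ''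
          ↑(({k, l} : Finset ℕ) ×ˢ (Finset.Icc 1 (m + 1) \ {k, l})) ∪
        {w | x⁻¹ ≠ x ∧ w = intvl m x⁻¹ k l} := by
  have hx' : x⁻¹ ≠ 1 := inv_ne_one.2 hx
  ext w
  simp only [Set.mem_union, Set.mem_image, Finset.coe_product, Set.mem_prod, Finset.mem_coe,
    Finset.mem_insert, Finset.mem_singleton, Finset.mem_sdiff, Finset.mem_Icc, Prod.exists,
    Function.uncurry_apply_pair, Set.mem_ofPred_eq]
  constructor
  · rintro ⟨⟨k', l', hk', hkl', hl', hw⟩, hadj⟩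
    obtain ⟨u, hu, rfl⟩ : ∃ u, (u = x ∨ u = x⁻¹) ∧ w = intvl m u k' l' :=
      hw.elim (⟨x, Or.inl rfl, ·⟩) (⟨x⁻¹, Or.inr rfl, ·⟩)
    rw [cAdj_intvl_iff hx (by rcases hu with rfl | rfl <;> assumption) hk hkl hl hk' hkl' hl']
      at hadj
    rcases hadj with ⟨rfl, rfl, hux⟩ | ⟨⟨rfl, hl'l⟩ | ⟨hk'k, rfl⟩, rfl⟩ | ⟨rfl | rfl, rfl⟩
    · obtain rfl := hu.resolve_left hux
      exact Or.inr ⟨hux, rfl⟩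
    · refine Or.inl ⟨k', l', ⟨by simp, by omega⟩, ?_⟩
      rw [endpointNbr, if_pos (by omega), min_eq_left hkl'.le, max_eq_right hkl'.le]
    · refine Or.inl ⟨l', k', ⟨by simp, by omega⟩, ?_⟩
      rw [endpointNbr, if_pos (by omega), min_eq_right hkl'.le, max_eq_left hkl'.le]
    · refine Or.inl ⟨k', l', ⟨by simp, by omega⟩, ?_⟩
      rw [endpointNbr, if_neg (by omega), min_eq_left hkl'.le, max_eq_right hkl'.le]
    · refine Or.inl ⟨l', k', ⟨by simp, by omega⟩, ?_⟩
      rw [endpointNbr, if_neg (by omega), min_eq_right hkl'.le, max_eq_left hkl'.le]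
  · rintro (⟨c, d, ⟨hc, hd, hdkl⟩, rfl⟩ | ⟨hinv, rfl⟩)
    · refine ⟨⟨min c d, max c d, by omega, by omega, by omega, ?_⟩, ?_⟩
      · unfold endpointNbr
        split_ifs <;> simp
      · refine cAdj_intvl_of_cases hx hk hkl hl (by omega) (by omega) (by omega) ?_
        split_ifs with hs
        · exact Or.inr (Or.inl ⟨by omega, rfl⟩)
        · exact Or.inr (Or.inr ⟨by omega, rfl⟩)
    · exact ⟨⟨k, l, hk, hkl, hl, Or.inr rfl⟩, cAdj_intvl_of_cases hx hk hkl hl hk hkl hl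
        (Or.inl ⟨rfl, rfl, hinv⟩)⟩

theorem endpointNbr_injOn (hx : x ≠ 1) (hk : 1 ≤ k) (hkl : k < l) (hl : l ≤ m + 1) :
    Set.InjOn (Function.uncurry (endpointNbr m x k))
      ↑(({k, l} : Finset ℕ) ×ˢ (Finset.Icc 1 (m + 1) \ {k, l})) := by
  rintro ⟨c, d⟩ hcd ⟨c', d'⟩ hcd' h
  simp only [Finset.coe_product, Set.mem_prod, Finset.mem_coe, Finset.mem_insert,
    Finset.mem_singleton, Finset.mem_sdiff, Finset.mem_Icc] at hcd hcd'
  obtain ⟨-, hmin, hmax⟩ := (intvl_eq_intvl_iff (by split_ifs <;> simpa) (by split_ifs <;> simpa)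
    (by omega) (by omega) (by omega) (by omega) (by omega) (by omega)).1 h
  simp only [Prod.mk.injEq]
  omega

theorem ncard_nbrs_intvl (hx : x ≠ 1) (hk : 1 ≤ k) (hkl : k < l) (hl : l ≤ m + 1) :
    {w | w ∈ cI m x ∧ cAdj m (intvl m x k l) w}.ncard =
      if orderOf x = 2 then 2 * m - 2 else 2 * m - 1 := by
  have hdisj : Disjoint (Function.uncurry (endpointNbr m x k) ''
      ↑(({k, l} : Finset ℕ) ×ˢ (Finset.Icc 1 (m + 1) \ {k, l})))
      {w | x⁻¹ ≠ x ∧ w = intvl m x⁻¹ k l} := by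
    rw [Set.disjoint_left]
    rintro _ ⟨⟨c, d⟩, hcd, rfl⟩ ⟨-, h⟩
    simp only [Finset.coe_product, Set.mem_prod, Finset.mem_coe, Finset.mem_insert,
      Finset.mem_singleton, Finset.mem_sdiff, Finset.mem_Icc] at hcd
    obtain ⟨-, hmin, hmax⟩ := (intvl_eq_intvl_iff (by split_ifs <;> simpa) (inv_ne_one.2 hx)
      (by omega) (by omega) (by omega) hk hkl hl).1 h
    omega
  have hcard : (Finset.Icc 1 (m + 1) \ {k, l}).card = m - 1 := by
    rw [Finset.card_sdiff_of_subset (by intro; simp; omega), Nat.card_Icc, Finset.card_pair hkl.ne]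
    omega
  rw [nbrs_intvl_eq hx hk hkl hl, Set.ncard_union_eq hdisj (Set.toFinite _)
    ((Set.finite_singleton (intvl m x⁻¹ k l)).subset fun w hw => hw.2),
    (endpointNbr_injOn hx hk hkl hl).ncard_image, Set.ncard_coe_finset, Finset.card_product, hcard,
    Finset.card_pair hkl.ne]
  split_ifs with h
  · simp only [inv_eq_self_of_orderOf_eq_two h, ne_eq, not_true_eq_false, false_and,
      Set.ofPred_false, Set.ncard_empty, add_zero]
    omega
  · have : x⁻¹ ≠ x := fun h' =>
      h (orderOf_eq_prime_iff.2 ⟨by rw [sq, ← inv_eq_iff_mul_eq_one, h'], hx⟩)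
    simp only [ne_eq, this, not_false_eq_true, true_and, Set.ofPred_eq_eq_singleton,
      Set.ncard_singleton]
    omega

end

theorem induced_subgraph_regular [Group G] (m : ℕ) (x : G) :
    (orderOf x = 2 → ∀ v ∈ cI m x,
      {w : Fin m → G | w ∈ cI m x ∧ cAdj m v w}.ncard = 2 * m - 2) ∧
    (2 < orderOf x → ∀ v ∈ cI m x,
      {w : Fin m → G | w ∈ cI m x ∧ cAdj m v w}.ncard = 2 * m - 1) := by
  have degree (hx : x ≠ 1) (v : Fin m → G) (hv : v ∈ cI m x) :
      {w | w ∈ cI m x ∧ cAdj m v w}.ncard = if orderOf x = 2 then 2 * m - 2 else 2 * m - 1 := by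
    obtain ⟨k, l, hk, hkl, hl, rfl | rfl⟩ := hv
    · exact ncard_nbrs_intvl hx hk hkl hl
    · rw [← cI_inv, ncard_nbrs_intvl (inv_ne_one.2 hx) hk hkl hl, orderOf_inv]
  have ne_one (h : 2 ≤ orderOf x) : x ≠ 1 := by
    rintro rfl
    simp at h
  refine ⟨fun h v hv => ?_, fun h v hv => ?_⟩
  · rw [degree (ne_one h.ge) v hv, if_pos h]
  · rw [degree (ne_one h.le) v hv, if_neg h.ne']

end CayleyStmt10
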